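/- For M(θ) as in the CL stationary correlation, M(θ₁ − θ₂) ≠ 1 for some (θ₁,θ₂) (whenever σ > 0); hence the stationary two-particle distribution F₂(θ₁,θ₂) = M(θ₁−θ₂) is not the product of its one-particle marginals (which are uniform), i.e., the equilibrium is not chaotic. -/

import Mathlib

open Real

/-- The CL stationary correlation function on `[0, 2π]`, with `σ̄ = σ/√2`. -/
noncomputable def Mcl (σ θ : ℝ) : ℝ :=
  let sb := σ / Real.sqrt 2
  (1 / (2 * sb * (Real.exp (2 * Real.pi / sb) - 1))) *
    (Real.exp (θ / sb) + Real.exp ((2 * Real.pi - θ) / sb))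

/-- The `2π`-periodic extension of `Mcl`. -/
noncomputable def MclPer (σ θ : ℝ) : ℝ :=
  Mcl σ (2 * Real.pi * Int.fract (θ / (2 * Real.pi)))

/-! `M` is a positive multiple of `cosh ((θ - π) / σ̄)`, so it has a strict minimum at `θ = π`;
hence it cannot be constant, in particular not `≡ 1 = 1 · 1`, the product of the uniform
marginals. -/

lemma exp_div_add_exp_sub_div_eq_mul_cosh (a θ s : ℝ) :
    exp (θ / s) + exp ((2 * a - θ) / s) = 2 * exp (a / s) * cosh ((θ - a) / s) := by
  have h₁ : exp (θ / s) = exp (a / s) * exp ((θ - a) / s) := by rw [← exp_add]; ring_nf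
  have h₂ : exp ((2 * a - θ) / s) = exp (a / s) * exp (-((θ - a) / s)) := by
    rw [← exp_add]; ring_nf
  rw [cosh_eq, h₁, h₂]
  ring

lemma MclPer_eq_Mcl {σ θ : ℝ} (h₀ : 0 ≤ θ) (h₁ : θ < 2 * π) : MclPer σ θ = Mcl σ θ := by
  have hπ : 0 < 2 * π := by positivity
  rw [MclPer, Int.fract_eq_self.mpr ⟨div_nonneg h₀ hπ.le, (div_lt_one hπ).mpr h₁⟩,
    mul_div_cancel₀ _ hπ.ne']

lemma Mcl_pi_lt_Mcl {σ θ : ℝ} (hσ : 0 < σ) (hθ : θ ≠ π) : Mcl σ π < Mcl σ θ := by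
  set s := σ / √2 with hs_def
  have hs : 0 < s := by positivity
  have hc : 0 < 1 / (2 * s * (exp (2 * π / s) - 1)) := by
    have : 1 < exp (2 * π / s) := one_lt_exp_iff.mpr (by positivity)
    have : 0 < exp (2 * π / s) - 1 := by linarith
    positivity
  simp only [Mcl, ← hs_def, exp_div_add_exp_sub_div_eq_mul_cosh π]
  gcongr
  rw [sub_self, zero_div, cosh_zero]
  exact one_lt_cosh.mpr (div_ne_zero (sub_ne_zero.mpr hθ) hs.ne')

/-- The CL equilibrium is not chaotic: the stationary two-particle distribution
`F₂(θ₁,θ₂) = M(θ₁−θ₂)` is not the product of its (uniform) one-particle marginals,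
since `M(θ₁ − θ₂) ≠ 1 = 1·1` for some `(θ₁, θ₂)`. -/
theorem CL_equilibrium_not_chaotic (σ : ℝ) (hσ : 0 < σ) :
    ∃ θ₁ θ₂ : ℝ, MclPer σ (θ₁ - θ₂) ≠ (1 : ℝ) * 1 := by
  by_contra! hconst
  have h₀ : Mcl σ 0 = 1 := by
    simpa [MclPer_eq_Mcl le_rfl two_pi_pos] using hconst 0 0
  have hπ : Mcl σ π = 1 := by
    simpa [MclPer_eq_Mcl pi_pos.le (by linarith [pi_pos])] using hconst π 0
  exact (Mcl_pi_lt_Mcl hσ pi_ne_zero.symm).ne (hπ.trans h₀.symm)
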